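/- Let X ⊆ ℝ^n be Clarke regular, let g be a continuous metric on X, and let f : X → ℝ^n be a continuous vector field. Then for every x₀ ∈ X, a function x : [0,T) → X with x(0) = x₀ is a Carathéodory solution of ẋ ∈ Π^g_X f(x) if and only if there is a locally integrable v : [0,T) → ℝ^n with x(t) = x₀ + ∫₀^t v(s) ds for all t ∈ [0,T) and v(t) ∈ f(x(t)) − N^g_{x(t)} X for almost every t ∈ [0,T). -/

import Mathlib

open MeasureTheory Filter Topology Set
open scoped RealInnerProductSpace

/-- Euclidean space ℝ^n. -/
abbrev Euc (n : ℕ) := EuclideanSpace ℝ (Fin n)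

variable {n : ℕ}

/-- The tangent (contingent) cone of `X` at `x`. -/
def tanCone (X : Set (Euc n)) (x : Euc n) : Set (Euc n) :=
  {v | ∃ (xk : ℕ → Euc n) (δ : ℕ → ℝ),
    (∀ k, xk k ∈ X) ∧ Tendsto xk atTop (𝓝 x) ∧
    (∀ k, 0 < δ k) ∧ Tendsto δ atTop (𝓝 0) ∧
    Tendsto (fun k => (δ k)⁻¹ • (xk k - x)) atTop (𝓝 v)}

/-- The Clarke tangent cone of `X` at `x` (inner limit of tangent cones). -/
def clarkeCone (X : Set (Euc n)) (x : Euc n) : Set (Euc n) :=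
  {v | ∀ yk : ℕ → Euc n, (∀ k, yk k ∈ X) → Tendsto yk atTop (𝓝 x) →
    ∃ vk : ℕ → Euc n, (∀ k, vk k ∈ tanCone X (yk k)) ∧ Tendsto vk atTop (𝓝 v)}

/-- A set is locally compact if it is the intersection of a closed and an open set. -/
def LocCompactSet (X : Set (Euc n)) : Prop :=
  ∃ C U : Set (Euc n), IsClosed C ∧ IsOpen U ∧ X = C ∩ U

/-- `X` is Clarke regular: locally compact and tangent cone equals Clarke tangent cone. -/
def ClarkeRegular (X : Set (Euc n)) : Prop :=
  LocCompactSet X ∧ ∀ x ∈ X, tanCone X x = clarkeCone X x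

/-- A (Riemannian) metric: an inner product `B x` on ℝ^n for every point `x`. -/
structure VarMetric (n : ℕ) where
  B : Euc n → Euc n →L[ℝ] Euc n →L[ℝ] ℝ
  symm : ∀ x v w, B x v w = B x w v
  posdef : ∀ x v, v ≠ 0 → 0 < B x v v

namespace VarMetric

/-- The norm induced by the metric at `x`. -/
noncomputable def gnorm (g : VarMetric n) (x v : Euc n) : ℝ := Real.sqrt (g.B x v v)

/-- Maximum eigenvalue (max of the `g`-norm over the Euclidean unit sphere). -/
noncomputable def maxEig (g : VarMetric n) (x : Euc n) : ℝ :=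
  sSup {r | ∃ v : Euc n, ‖v‖ = 1 ∧ r = g.gnorm x v}

/-- Minimum eigenvalue (min of the `g`-norm over the Euclidean unit sphere). -/
noncomputable def minEig (g : VarMetric n) (x : Euc n) : ℝ :=
  sInf {r | ∃ v : Euc n, ‖v‖ = 1 ∧ r = g.gnorm x v}

/-- Condition number of the metric at `x`. -/
noncomputable def cond (g : VarMetric n) (x : Euc n) : ℝ := g.maxEig x / g.minEig x

end VarMetric

/-- The projected vector field: `g`-closest points to `f x` in the tangent cone. -/
noncomputable def projVF (X : Set (Euc n)) (g : VarMetric n) (f : Euc n → Euc n)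
    (x : Euc n) : Set (Euc n) :=
  {v | v ∈ tanCone X x ∧ ∀ w ∈ tanCone X x, g.gnorm x (v - f x) ≤ g.gnorm x (w - f x)}

/-- Krasovskii regularization of a set-valued map `F` on `X`. -/
def kras (X : Set (Euc n)) (F : Euc n → Set (Euc n)) (x : Euc n) : Set (Euc n) :=
  closure (convexHull ℝ {v | ∃ (xk : ℕ → Euc n) (vk : ℕ → Euc n),
    (∀ k, xk k ∈ X) ∧ Tendsto xk atTop (𝓝 x) ∧
    (∀ k, vk k ∈ F (xk k)) ∧ Tendsto vk atTop (𝓝 v)})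

/-- Carathéodory solution of `ẋ ∈ F(x)`, `x 0 = x₀`, on the interval `I`
(`I = Set.Ico 0 T`, or `Set.Ici 0` for complete solutions). -/
def IsSolOn (X : Set (Euc n)) (F : Euc n → Set (Euc n)) (x₀ : Euc n)
    (x : ℝ → Euc n) (I : Set ℝ) : Prop :=
  x 0 = x₀ ∧ (∀ t ∈ I, x t ∈ X) ∧
  ∃ v : ℝ → Euc n, LocallyIntegrableOn v I volume ∧
    (∀ t ∈ I, x t = x₀ + ∫ s in (0:ℝ)..t, v s) ∧
    (∀ᵐ t ∂(volume.restrict I), v t ∈ F (x t))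

/-- The normal cone of `X` at `x` with respect to the metric `g` (polar of the Clarke cone). -/
def normalCone (X : Set (Euc n)) (g : VarMetric n) (x : Euc n) : Set (Euc n) :=
  {η | ∀ v ∈ clarkeCone X x, g.B x v η ≤ 0}


section Aux
variable {n : ℕ}

lemma B_nonneg (g : VarMetric n) (x w : Euc n) : 0 ≤ g.B x w w := by
  rcases eq_or_ne w 0 with h | h
  · simp [h]
  · exact (g.posdef x w h).le

lemma gnorm_le_gnorm_iff (g : VarMetric n) (x a b : Euc n) :
    g.gnorm x a ≤ g.gnorm x b ↔ g.B x a a ≤ g.B x b b := by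
  unfold VarMetric.gnorm
  constructor
  · intro h
    calc g.B x a a = Real.sqrt (g.B x a a) ^ 2 := (Real.sq_sqrt (B_nonneg g x a)).symm
      _ ≤ Real.sqrt (g.B x b b) ^ 2 := by
          exact pow_le_pow_left₀ (Real.sqrt_nonneg _) h 2
      _ = g.B x b b := Real.sq_sqrt (B_nonneg g x b)
  · exact fun h => Real.sqrt_le_sqrt h

lemma zero_mem_tanCone {X : Set (Euc n)} {x : Euc n} (hx : x ∈ X) : (0:Euc n) ∈ tanCone X x := by
  refine ⟨fun _ => x, fun k => 1/(k+1), fun _ => hx, tendsto_const_nhds, fun k => by positivity,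
    tendsto_one_div_add_atTop_nhds_zero_nat, by simpa using tendsto_const_nhds⟩

lemma smul_mem_tanCone {X : Set (Euc n)} {x v : Euc n} {s : ℝ} (hs : 0 < s)
    (hv : v ∈ tanCone X x) : s • v ∈ tanCone X x := by
  obtain ⟨xk, δ, hmem, hxk, hδpos, hδ0, hq⟩ := hv
  refine ⟨xk, fun k => δ k / s, hmem, hxk, fun k => div_pos (hδpos k) hs, by
      simpa using hδ0.div_const s, ?_⟩
  have : ∀ k, (δ k / s)⁻¹ • (xk k - x) = s • ((δ k)⁻¹ • (xk k - x)) := by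
    intro k
    rw [smul_smul]
    congr 1
    field_simp
  rw [show (fun k => (δ k / s)⁻¹ • (xk k - x)) = fun k => s • ((δ k)⁻¹ • (xk k - x)) from funext this]
  exact (hq.const_smul s)

lemma smul_mem_clarkeCone {X : Set (Euc n)} {x v : Euc n} {s : ℝ} (hs : 0 < s)
    (hv : v ∈ clarkeCone X x) : s • v ∈ clarkeCone X x := by
  intro yk hyk hy
  obtain ⟨vk, hvk, hv'⟩ := hv yk hyk hy
  exact ⟨fun k => s • vk k, fun k => smul_mem_tanCone hs (hvk k), hv'.const_smul s⟩

end Aux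

lemma clarke_uniform {X : Set (Euc n)} (hloc : LocCompactSet X) {x v : Euc n} (_hx : x ∈ X)
    (hv : v ∈ clarkeCone X x) :
    ∀ ε > 0, ∃ δ > 0, ∀ y ∈ X, ‖y - x‖ ≤ δ → ∀ t : ℝ, 0 < t → t ≤ δ →
      ∃ z ∈ X, ‖z - (y + t • v)‖ ≤ ε * t := by
  obtain ⟨C, U, hC, hU, hXeq⟩ := hloc
  by_contra hcon
  push_neg at hcon
  obtain ⟨ε, hε, hδ⟩ := hcon
  -- radius around x staying in U
  have hxU : x ∈ U := (hXeq ▸ _hx).2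
  obtain ⟨ρ, hρ, hball⟩ := Metric.isOpen_iff.1 hU x hxU
  set r := ρ / 2 with hr
  have hrpos : 0 < r := by positivity
  have hrU : Metric.closedBall x r ⊆ U := fun y hy =>
    hball (lt_of_le_of_lt (Metric.mem_closedBall.1 hy) (by simp [hr]; linarith))
  set K : Set (Euc n) := Metric.closedBall x r ∩ C with hK
  have hKcomp : IsCompact K := (isCompact_closedBall x r).inter_right hC
  have hKX : K ⊆ X := by
    intro z hz
    rw [hXeq]
    exact ⟨hz.2, hrU hz.1⟩
  -- the bad sequences
  set γ : ℕ → ℝ := fun k => min r (1 / (k + 1)) / (1 + ‖v‖ + ε) with hγ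
  have hγpos : ∀ k, 0 < γ k := by
    intro k
    apply div_pos (lt_min hrpos (by positivity))
    have := norm_nonneg v; linarith
  have hγle : ∀ k, γ k * (1 + ‖v‖ + ε) ≤ min r (1 / (k + 1)) := by
    intro k
    rw [hγ, div_mul_cancel₀]
    have := norm_nonneg v; intro h; linarith
  choose y hyX hyx t htpos htle hbad using fun k => hδ (γ k) (hγpos k)
  -- the maximal-progress set
  set A : ℕ → Set ℝ := fun k =>
    {s | s ∈ Icc 0 (t k) ∧ ∃ z ∈ X, ‖z - (y k + s • v)‖ ≤ ε / 2 * s} with hA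
  have hA0 : ∀ k, (0:ℝ) ∈ A k := by
    intro k
    exact ⟨⟨le_refl _, (htpos k).le⟩, y k, hyX k, by simp⟩
  have hAbdd : ∀ k, BddAbove (A k) := fun k => ⟨t k, fun s hs => hs.1.2⟩
  set S : ℕ → ℝ := fun k => sSup (A k) with hS
  have hS0 : ∀ k, 0 ≤ S k := fun k => le_csSup (hAbdd k) (hA0 k)
  have hSt : ∀ k, S k ≤ t k := fun k => csSup_le ⟨0, hA0 k⟩ (fun s hs => hs.1.2)
  -- location bound
  have hloc_bound : ∀ k (s : ℝ) (w : Euc n), 0 ≤ s → s ≤ t k →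
      ‖w - (y k + s • v)‖ ≤ ε / 2 * s → ‖w - x‖ ≤ min r (1 / (k + 1)) := by
    intro k s w hs0 hst hb
    have hsγ : s ≤ γ k := hst.trans (htle k)
    have hid : w - x = (w - (y k + s • v)) + (y k - x) + s • v := by module
    have h1 : ‖w - x‖ ≤ ‖w - (y k + s • v)‖ + ‖y k - x‖ + s * ‖v‖ := by
      rw [hid]
      refine (norm_add_le _ _).trans ?_
      have := norm_add_le (w - (y k + s • v)) (y k - x)
      have hsm : ‖s • v‖ = s * ‖v‖ := by
        rw [norm_smul, Real.norm_eq_abs, abs_of_nonneg hs0]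
      linarith
    have h2 : ε / 2 * s + γ k + s * ‖v‖ ≤ γ k * (1 + ‖v‖ + ε) := by
      have hv0 := norm_nonneg v
      nlinarith [hγpos k]
    have := hγle k
    have := hyx k
    linarith
  -- existence of the maximal-progress point
  have hz : ∀ k, ∃ z ∈ X, ‖z - (y k + S k • v)‖ ≤ ε / 2 * S k ∧
      ‖z - x‖ ≤ min r (1 / (k + 1)) := by
    intro k
    have hex : ∀ m : ℕ, ∃ s, s ∈ A k ∧ S k - 1 / (m + 1) < s := by
      intro m
      obtain ⟨s, hs, h⟩ := exists_lt_of_lt_csSup ⟨0, hA0 k⟩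
        (show S k - 1 / (m + 1 : ℝ) < S k by
          have : (0:ℝ) < 1 / (m + 1) := by positivity
          linarith)
      exact ⟨s, hs, h⟩
    choose sm hsmA hsm using hex
    have hsle : ∀ m, sm m ≤ S k := fun m => le_csSup (hAbdd k) (hsmA m)
    have hsm_t : Tendsto sm atTop (𝓝 (S k)) := by
      apply tendsto_of_tendsto_of_tendsto_of_le_of_le
        (g := fun m : ℕ => S k - 1 / (m + 1)) (h := fun _ => S k)
      · have h0 : Tendsto (fun m : ℕ => 1 / (m + 1 : ℝ)) atTop (𝓝 0) :=
          tendsto_one_div_add_atTop_nhds_zero_nat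
        simpa using tendsto_const_nhds.sub h0
      · exact tendsto_const_nhds
      · exact fun m => (hsm m).le
      · exact hsle
    choose z hzX hzb using fun m => (hsmA m).2
    have hzbd : ∀ m, ‖z m - x‖ ≤ min r (1 / (k + 1)) := fun m =>
      hloc_bound k (sm m) (z m) (hsmA m).1.1 (hsmA m).1.2 (hzb m)
    have hzK : ∀ m, z m ∈ K := by
      intro m
      refine ⟨Metric.mem_closedBall.2 ?_, (hXeq ▸ hzX m).1⟩
      rw [dist_eq_norm]
      exact (hzbd m).trans (min_le_left _ _)
    obtain ⟨zz, hzzK, φ, hφ, hzz⟩ := hKcomp.tendsto_subseq hzK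
    have hsmφ : Tendsto (fun i => sm (φ i)) atTop (𝓝 (S k)) := hsm_t.comp hφ.tendsto_atTop
    have h1 : Tendsto (fun i => ‖z (φ i) - (y k + sm (φ i) • v)‖) atTop
        (𝓝 ‖zz - (y k + S k • v)‖) :=
      (hzz.sub (tendsto_const_nhds.add (hsmφ.smul_const v))).norm
    have h2 : Tendsto (fun i => ε / 2 * sm (φ i)) atTop (𝓝 (ε / 2 * S k)) :=
      hsmφ.const_mul _
    have hlim : ‖zz - (y k + S k • v)‖ ≤ ε / 2 * S k :=
      le_of_tendsto_of_tendsto' h1 h2 (fun i => hzb (φ i))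
    exact ⟨zz, hKX hzzK, hlim, hloc_bound k (S k) zz (hS0 k) (hSt k) hlim⟩
  choose z hzX hzb hzxb using hz
  -- z k → x
  have hzx : Tendsto z atTop (𝓝 x) := by
    have h0 : Tendsto (fun k => z k - x) atTop (𝓝 0) := by
      apply squeeze_zero_norm (fun k => (hzxb k).trans (min_le_right _ _))
      exact tendsto_one_div_add_atTop_nhds_zero_nat
    simpa using h0.add_const x
  obtain ⟨w, hwtan, hwv⟩ := hv z hzX hzx
  have hev : ∀ᶠ k in atTop, ‖w k - v‖ < ε / 4 := by
    have h0 := hwv.eventually (Metric.ball_mem_nhds v (show (0:ℝ) < ε / 4 by positivity))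
    filter_upwards [h0] with k hk
    rw [dist_eq_norm] at hk
    exact hk
  obtain ⟨k0, hk0⟩ := hev.exists
  rcases eq_or_lt_of_le (hSt k0) with heq | hlt
  · -- S k0 = t k0 : direct contradiction with badness
    have hb1 := hbad k0 (z k0) (hzX k0)
    have hb2 := hzb k0
    rw [heq] at hb2
    nlinarith [htpos k0]
  · -- S k0 < t k0 : extend progress, contradiction with sup
    obtain ⟨p, σ, hpX, _hp, hσpos, hσ0, hq⟩ := hwtan k0
    have hev2 : ∀ᶠ j in atTop, σ j < t k0 - S k0 ∧
        ‖(σ j)⁻¹ • (p j - z k0) - w k0‖ < ε / 4 := by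
      have e1 : ∀ᶠ j in atTop, σ j < t k0 - S k0 :=
        hσ0.eventually (gt_mem_nhds (by linarith))
      have e2 : ∀ᶠ j in atTop, ‖(σ j)⁻¹ • (p j - z k0) - w k0‖ < ε / 4 := by
        have h0 := hq.eventually (Metric.ball_mem_nhds (w k0) (show (0:ℝ) < ε / 4 by positivity))
        filter_upwards [h0] with j hj
        rw [dist_eq_norm] at hj
        exact hj
      exact e1.and e2
    obtain ⟨j, hj1, hj2⟩ := hev2.exists
    set s' := S k0 + σ j with hs'
    have hs'A : s' ∈ A k0 := by
      refine ⟨⟨by have := hS0 k0; have := hσpos j; positivity, by linarith⟩, p j, hpX j, ?_⟩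
      have hid : p j - (y k0 + s' • v) =
          (p j - z k0 - σ j • w k0) + (z k0 - (y k0 + S k0 • v)) + σ j • (w k0 - v) := by
        rw [hs']; module
      have n1 : ‖p j - z k0 - σ j • w k0‖ ≤ σ j * (ε / 4) := by
        have hsm : σ j • ((σ j)⁻¹ • (p j - z k0) - w k0) = p j - z k0 - σ j • w k0 := by
          rw [smul_sub, smul_inv_smul₀ (hσpos j).ne']
        rw [← hsm, norm_smul, Real.norm_eq_abs, abs_of_pos (hσpos j)]
        exact mul_le_mul_of_nonneg_left hj2.le (hσpos j).le
      have n3 : ‖σ j • (w k0 - v)‖ ≤ σ j * (ε / 4) := by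
        rw [norm_smul, Real.norm_eq_abs, abs_of_pos (hσpos j)]
        exact mul_le_mul_of_nonneg_left hk0.le (hσpos j).le
      calc ‖p j - (y k0 + s' • v)‖
          ≤ ‖p j - z k0 - σ j • w k0‖ + ‖z k0 - (y k0 + S k0 • v)‖ + ‖σ j • (w k0 - v)‖ := by
            rw [hid]
            refine (norm_add_le _ _).trans ?_
            have := norm_add_le (p j - z k0 - σ j • w k0) (z k0 - (y k0 + S k0 • v))
            linarith
        _ ≤ σ j * (ε / 4) + ε / 2 * S k0 + σ j * (ε / 4) := by
            have := hzb k0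
            linarith
        _ = ε / 2 * s' := by rw [hs']; ring
    have hle := le_csSup (hAbdd k0) hs'A
    rw [hs'] at hle
    linarith [hσpos j]

lemma add_mem_tanCone {X : Set (Euc n)} (hloc : LocCompactSet X) {x v₁ v₂ : Euc n}
    (hx : x ∈ X) (h1 : v₁ ∈ clarkeCone X x) (h2 : v₂ ∈ clarkeCone X x) :
    v₁ + v₂ ∈ tanCone X x := by
  have key1 := clarke_uniform hloc hx h1
  have key2 := clarke_uniform hloc hx h2
  -- for each j, find a point z' at scale t j with error 2/(j+1) * t j
  have main : ∀ j : ℕ, ∃ t : ℝ, 0 < t ∧ t ≤ 1 / (j + 1) ∧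
      ∃ z' ∈ X, ‖z' - (x + t • (v₁ + v₂))‖ ≤ 2 / (j + 1) * t := by
    intro j
    have hεpos : (0:ℝ) < 1 / (j + 1) := by positivity
    obtain ⟨δ₁, hδ₁, H1⟩ := key1 (1 / (j + 1)) hεpos
    obtain ⟨δ₂, hδ₂, H2⟩ := key2 (1 / (j + 1)) hεpos
    set t := min (min δ₁ (δ₂ / (1 + ‖v₁‖ + 1))) (1 / (j + 1 : ℝ)) with ht
    have hv₁ := norm_nonneg v₁
    have htpos : 0 < t := by
      apply lt_min (lt_min hδ₁ (by positivity)) hεpos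
    have ht1 : t ≤ δ₁ := (min_le_left _ _).trans (min_le_left _ _)
    have ht2' : t ≤ δ₂ / (1 + ‖v₁‖ + 1) := (min_le_left _ _).trans (min_le_right _ _)
    have ht2 : t ≤ δ₂ := ht2'.trans (by
      rw [div_le_iff₀ (by linarith)]
      nlinarith [hδ₂])
    have htj : t ≤ 1 / (j + 1) := min_le_right _ _
    obtain ⟨z, hzX, hz⟩ := H1 x hx (by simp; exact hδ₁.le) t htpos ht1
    have hε1 : (1:ℝ) / (j + 1) ≤ 1 := by
      rw [div_le_one (by positivity)]
      simp
    have hzx : ‖z - x‖ ≤ δ₂ := by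
      have hid : z - x = (z - (x + t • v₁)) + t • v₁ := by module
      have : ‖z - x‖ ≤ 1 / (j + 1) * t + t * ‖v₁‖ := by
        rw [hid]
        have hn := norm_add_le (z - (x + t • v₁)) (t • v₁)
        have : ‖t • v₁‖ = t * ‖v₁‖ := by
          rw [norm_smul, Real.norm_eq_abs, abs_of_pos htpos]
        linarith
      have : ‖z - x‖ ≤ t * (1 + ‖v₁‖ + 1) := by nlinarith
      calc ‖z - x‖ ≤ t * (1 + ‖v₁‖ + 1) := this
        _ ≤ δ₂ / (1 + ‖v₁‖ + 1) * (1 + ‖v₁‖ + 1) := by nlinarith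
        _ = δ₂ := by field_simp
    obtain ⟨z', hz'X, hz'⟩ := H2 z hzX hzx t htpos ht2
    refine ⟨t, htpos, htj, z', hz'X, ?_⟩
    have hid : z' - (x + t • (v₁ + v₂)) = (z' - (z + t • v₂)) + (z - (x + t • v₁)) := by
      module
    calc ‖z' - (x + t • (v₁ + v₂))‖ ≤ ‖z' - (z + t • v₂)‖ + ‖z - (x + t • v₁)‖ := by
          rw [hid]; exact norm_add_le _ _
      _ ≤ 2 / (j + 1) * t := by
          have h2t : 2 / (j + 1 : ℝ) * t = 1 / (j + 1) * t + 1 / (j + 1) * t := by ring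
          rw [h2t]
          linarith [hz', hz]
  choose t htpos htle z' hz'X hz'b using main
  have htlim : Tendsto t atTop (𝓝 0) := by
    apply tendsto_of_tendsto_of_tendsto_of_le_of_le
      (g := fun _ : ℕ => (0:ℝ)) (h := fun j : ℕ => 1 / (j + 1 : ℝ))
    · exact tendsto_const_nhds
    · exact tendsto_one_div_add_atTop_nhds_zero_nat
    · exact fun j => (htpos j).le
    · exact htle
  have hquot : Tendsto (fun j => (t j)⁻¹ • (z' j - x)) atTop (𝓝 (v₁ + v₂)) := by
    have hb : ∀ j, ‖(t j)⁻¹ • (z' j - x) - (v₁ + v₂)‖ ≤ 2 / (j + 1) := by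
      intro j
      have hid : (t j)⁻¹ • (z' j - x) - (v₁ + v₂)
          = (t j)⁻¹ • (z' j - (x + t j • (v₁ + v₂))) := by
        rw [smul_sub, smul_sub]
        rw [smul_add (t j)⁻¹ x, smul_smul, inv_mul_cancel₀ (htpos j).ne', one_smul]
        module
      rw [hid, norm_smul, Real.norm_eq_abs, abs_of_pos (inv_pos.2 (htpos j))]
      calc (t j)⁻¹ * ‖z' j - (x + t j • (v₁ + v₂))‖ ≤ (t j)⁻¹ * (2 / (j + 1) * t j) := by
            exact mul_le_mul_of_nonneg_left (hz'b j) (inv_pos.2 (htpos j)).le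
        _ = 2 / (j + 1) := by
            field_simp
            exact div_self (htpos j).ne'
    have h0 : Tendsto (fun j => (t j)⁻¹ • (z' j - x) - (v₁ + v₂)) atTop (𝓝 0) := by
      apply squeeze_zero_norm hb
      have : Tendsto (fun j : ℕ => 1 / (j + 1 : ℝ)) atTop (𝓝 0) :=
        tendsto_one_div_add_atTop_nhds_zero_nat
      have h2 := this.const_mul (2:ℝ)
      simp only [mul_zero] at h2
      convert h2 using 2 with j
      ring
    simpa using h0.add_const (v₁ + v₂)
  have hz'x : Tendsto z' atTop (𝓝 x) := by
    have : Tendsto (fun j => t j • ((t j)⁻¹ • (z' j - x))) atTop (𝓝 ((0:ℝ) • (v₁ + v₂))) :=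
      htlim.smul hquot
    simp only [zero_smul] at this
    have heq : ∀ j, t j • ((t j)⁻¹ • (z' j - x)) = z' j - x := fun j =>
      smul_inv_smul₀ (htpos j).ne' _
    rw [funext heq] at this
    simpa using this.add_const x
  exact ⟨z', t, hz'X, hz'x, htpos, htlim, hquot⟩


section Bilin
variable (g : VarMetric n) (x : Euc n)

lemma B_add_left (a b c : Euc n) : g.B x (a + b) c = g.B x a c + g.B x b c := by
  rw [map_add]; rfl

lemma B_add_right (a b c : Euc n) : g.B x a (b + c) = g.B x a b + g.B x a c := by
  exact map_add (g.B x a) b c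

lemma B_smul_left (s : ℝ) (a c : Euc n) : g.B x (s • a) c = s * g.B x a c := by
  rw [ContinuousLinearMap.map_smul]; rfl

lemma B_smul_right (s : ℝ) (a c : Euc n) : g.B x a (s • c) = s * g.B x a c := by
  exact (g.B x a).map_smul s c

lemma B_neg_left (a c : Euc n) : g.B x (-a) c = - g.B x a c := by
  rw [map_neg]; rfl

lemma B_neg_right (a c : Euc n) : g.B x a (-c) = - g.B x a c := by
  exact (g.B x a).map_neg c

lemma B_sub_left (a b c : Euc n) : g.B x (a - b) c = g.B x a c - g.B x b c := by
  rw [map_sub]; rfl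

lemma B_sub_right (a b c : Euc n) : g.B x a (b - c) = g.B x a b - g.B x a c := by
  exact (g.B x a).map_sub b c

end Bilin

/-- Forward pointwise: the projection residual is in the normal cone. -/
lemma proj_residual_mem_normal {X : Set (Euc n)} (g : VarMetric n) (f : Euc n → Euc n)
    {x : Euc n} (hloc : LocCompactSet X) (hx : x ∈ X)
    (hreg : tanCone X x = clarkeCone X x) {v : Euc n} (hv : v ∈ projVF X g f x) :
    f x - v ∈ normalCone X g x := by
  intro w hw
  obtain ⟨hvtan, hmin⟩ := hv
  -- key inequality at v + s • w for s > 0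
  have hkey : ∀ s : ℝ, 0 < s → g.B x w (f x - v) ≤ s / 2 * g.B x w w := by
    intro s hs
    have hvs : v + s • w ∈ tanCone X x := by
      apply add_mem_tanCone hloc hx (hreg ▸ hvtan) (smul_mem_clarkeCone hs hw)
    have h1 := (gnorm_le_gnorm_iff g x (v - f x) (v + s • w - f x)).1 (hmin _ hvs)
    -- expand
    have hexp : g.B x (v + s • w - f x) (v + s • w - f x)
        = g.B x (v - f x) (v - f x) + 2 * s * g.B x w (v - f x) + s^2 * g.B x w w := by
      have e : v + s • w - f x = (v - f x) + s • w := by module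
      rw [e]
      simp only [B_add_left, B_add_right, B_smul_left, B_smul_right]
      rw [g.symm x (v - f x) w]
      ring
    rw [hexp] at h1
    have hBwfv : g.B x w (f x - v) = - g.B x w (v - f x) := by
      have e : f x - v = -(v - f x) := by module
      rw [e, B_neg_right]
    rw [hBwfv]
    nlinarith [h1, hs]

  -- let s → 0
  have hK := B_nonneg g x w
  by_contra hcon
  push_neg at hcon
  rcases eq_or_lt_of_le hK with hK0 | hK0
  · have := hkey 1 one_pos
    rw [← hK0] at this
    linarith
  · have := hkey (g.B x w (f x - v) / g.B x w w) (div_pos hcon hK0)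
    rw [div_mul_eq_mul_div, div_mul_eq_mul_div, mul_div_assoc,
      div_self hK0.ne', mul_one] at this
    linarith

/-- Backward pointwise: a normal-cone residual with two-sided tangency is the projection. -/
lemma mem_projVF_of_normal {X : Set (Euc n)} (g : VarMetric n) (f : Euc n → Euc n)
    {x v η : Euc n} (hreg : tanCone X x = clarkeCone X x)
    (hvt : v ∈ tanCone X x) (hvt' : -v ∈ tanCone X x)
    (hη : η ∈ normalCone X g x) (he : v = f x - η) : v ∈ projVF X g f x := by
  refine ⟨hvt, ?_⟩
  intro w hw
  rw [gnorm_le_gnorm_iff]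
  have hvη : g.B x v η = 0 := by
    have h1 : g.B x v η ≤ 0 := hη v (hreg ▸ hvt)
    have h2 : g.B x (-v) η ≤ 0 := hη (-v) (hreg ▸ hvt')
    rw [B_neg_left] at h2
    linarith
  have hwη : g.B x w η ≤ 0 := hη w (hreg ▸ hw)
  have hvfx : v - f x = -η := by rw [he]; module
  have hwfx : w - f x = (w - v) - η := by rw [he]; module
  rw [hvfx, hwfx]
  have hexp : g.B x ((w - v) - η) ((w - v) - η)
      = g.B x (w - v) (w - v) - 2 * g.B x (w - v) η + g.B x η η := by
    simp only [B_sub_left, B_sub_right]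
    simp only [g.symm x η w, g.symm x η v]
    ring
  have hexp2 : g.B x (-η) (-η) = g.B x η η := by
    rw [B_neg_left, B_neg_right]; ring
  rw [hexp, hexp2]
  have hwv : g.B x (w - v) η = g.B x w η - g.B x v η := by
    rw [B_sub_left]
  have := B_nonneg g x (w - v)
  nlinarith

/-- Helper: quotient convergence gives tangent cone membership. -/
lemma tanCone_of_quot {X : Set (Euc n)} {x₀ w : Euc n} (p : ℕ → Euc n) (δ : ℕ → ℝ)
    (hmem : ∀ k, p k ∈ X) (hpos : ∀ k, 0 < δ k) (hδ : Tendsto δ atTop (𝓝 0))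
    (hq : Tendsto (fun k => (δ k)⁻¹ • (p k - x₀)) atTop (𝓝 w)) : w ∈ tanCone X x₀ := by
  refine ⟨p, δ, hmem, ?_, hpos, hδ, hq⟩
  have h := hδ.smul hq
  simp only [zero_smul] at h
  have heq : ∀ k, δ k • ((δ k)⁻¹ • (p k - x₀)) = p k - x₀ := fun k =>
    smul_inv_smul₀ (hpos k).ne' _
  rw [funext heq] at h
  simpa using h.add_const x₀

/-- A.e. two-sided tangency of the derivative of an integral curve in X. -/
lemma ae_two_sided_tangent {X : Set (Euc n)} {T : ℝ} (hT : 0 < T) {x v : ℝ → Euc n}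
    (hmem : ∀ t ∈ Ico (0:ℝ) T, x t ∈ X)
    (hvloc : LocallyIntegrableOn v (Ico 0 T) volume)
    (hrep : ∀ t ∈ Ico (0:ℝ) T, x t = x 0 + ∫ s in (0:ℝ)..t, v s) :
    ∀ᵐ t ∂(volume.restrict (Ico (0:ℝ) T)),
      v t ∈ tanCone X (x t) ∧ -v t ∈ tanCone X (x t) := by
  have main : ∀ b ∈ Ioo (0:ℝ) T, ∀ᵐ t ∂(volume : Measure ℝ), t ∈ Ioo (0:ℝ) b →
      (v t ∈ tanCone X (x t) ∧ -v t ∈ tanCone X (x t)) := by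
    intro b hb
    have hsub : Icc (0:ℝ) b ⊆ Ico 0 T := fun s hs => ⟨hs.1, lt_of_le_of_lt hs.2 hb.2⟩
    have hIcc : IntegrableOn v (Icc 0 b) volume :=
      hvloc.integrableOn_compact_subset hsub isCompact_Icc
    set u : ℝ → Euc n := (Icc (0:ℝ) b).indicator v with hu
    have huint : Integrable u volume := (integrable_indicator_iff measurableSet_Icc).2 hIcc
    have hLeb := IsUnifLocDoublingMeasure.ae_tendsto_average_norm_sub
      (volume : Measure ℝ) huint.locallyIntegrable 1
    filter_upwards [hLeb] with t hLt ht
    obtain ⟨ht0, htb⟩ := ht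
    have htmem : t ∈ Icc (0:ℝ) b := ⟨ht0.le, htb.le⟩
    have hut : u t = v t := indicator_of_mem htmem v
    have havg : Tendsto (fun δ : ℝ => ⨍ y in Metric.closedBall t δ, ‖u y - u t‖)
        (𝓝[>] 0) (𝓝 0) := by
      have h1 := hLt (fun _ => t) id tendsto_id ?_
      · exact h1
      · filter_upwards [self_mem_nhdsWithin] with δ hδ
        have : (0:ℝ) ≤ 1 * δ := by simpa using (le_of_lt hδ)
        exact Metric.mem_closedBall_self this
    set ε : ℝ := min t (b - t) with hε
    have hεpos : 0 < ε := lt_min ht0 (by linarith [htb])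
    -- interval integrability within [0,b]
    have hII : ∀ c d : ℝ, c ∈ Icc (0:ℝ) b → d ∈ Icc (0:ℝ) b →
        IntervalIntegrable v volume c d := by
      intro c d hc hd
      rw [intervalIntegrable_iff']
      exact hIcc.mono_set (uIcc_subset_Icc hc hd)
    have hIIu : ∀ c d : ℝ, IntervalIntegrable u volume c d := by
      intro c d
      rw [intervalIntegrable_iff']
      exact huint.integrableOn
    -- the key bound
    have key : ∀ δ : ℝ, 0 < δ → δ ≤ ε →
        ‖δ⁻¹ • (x (t + δ) - x t) - v t‖ ≤ 2 * ⨍ y in Metric.closedBall t δ, ‖u y - u t‖ ∧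
        ‖δ⁻¹ • (x (t - δ) - x t) + v t‖ ≤ 2 * ⨍ y in Metric.closedBall t δ, ‖u y - u t‖ := by
      intro δ hδ0 hδε
      have hδt : δ ≤ t := hδε.trans (min_le_left _ _)
      have hδb : t + δ ≤ b := by
        have := hδε.trans (min_le_right _ _); linarith
      have hmem1 : t + δ ∈ Icc (0:ℝ) b := ⟨by linarith, hδb⟩
      have hmem2 : t ∈ Icc (0:ℝ) b := htmem
      have hmem3 : t - δ ∈ Icc (0:ℝ) b := ⟨by linarith, by linarith⟩
      -- x increments as integrals of u
      have hinc : ∀ c : ℝ, c ∈ Icc (0:ℝ) b → x c - x t = ∫ s in t..c, u s := by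
        intro c hc
        rw [hrep c (hsub hc), hrep t (hsub hmem2)]
        have hadj := intervalIntegral.integral_add_adjacent_intervals
          (hII 0 t ⟨le_refl 0, hb.1.le⟩ hmem2) (hII t c hmem2 hc)
        have h1 : x 0 + (∫ s in (0:ℝ)..c, v s) - (x 0 + ∫ s in (0:ℝ)..t, v s)
            = ∫ s in t..c, v s := by
          rw [← hadj]; abel
        rw [h1]
        apply intervalIntegral.integral_congr
        intro s hs
        have hs' : s ∈ Icc (0:ℝ) b := (uIcc_subset_Icc hmem2 hc) hs
        exact (indicator_of_mem hs' v).symm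
      -- generic bound for a subinterval of the ball
      have hball : ∀ c d : ℝ, c ∈ Icc (0:ℝ) b → d ∈ Icc (0:ℝ) b →
          Ioc c d ⊆ Metric.closedBall t δ → c ≤ d →
          (∫ s in Set.Ioc c d, ‖u s - u t‖) ≤
            2 * δ * ⨍ y in Metric.closedBall t δ, ‖u y - u t‖ := by
        intro c d _ _ hsubb _
        have hconst : IntegrableOn (fun _ : ℝ => u t) (Metric.closedBall t δ) volume := by
          exact integrableOn_const (isCompact_closedBall t δ).measure_lt_top.ne
        have hint : IntegrableOn (fun s => ‖u s - u t‖) (Metric.closedBall t δ) volume :=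
          (huint.integrableOn.sub hconst).norm
        have h1 : (∫ s in Set.Ioc c d, ‖u s - u t‖) ≤
            ∫ s in Metric.closedBall t δ, ‖u s - u t‖ := by
          apply setIntegral_mono_set hint
          · filter_upwards with s using norm_nonneg _
          · exact HasSubset.Subset.eventuallyLE hsubb
        have h2 : (∫ s in Metric.closedBall t δ, ‖u s - u t‖)
            = 2 * δ * ⨍ y in Metric.closedBall t δ, ‖u y - u t‖ := by
          rw [setAverage_eq, Real.volume_real_closedBall (by linarith),
            smul_eq_mul, ← mul_assoc, mul_inv_cancel₀ (by linarith), one_mul]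
        rw [← h2]; exact h1
      constructor
      · -- right quotient
        have hxinc := hinc (t + δ) hmem1
        have hsplit : (∫ s in t..(t + δ), u s) - δ • u t = ∫ s in t..(t+δ), (u s - u t) := by
          rw [intervalIntegral.integral_sub (hIIu t (t+δ)) (intervalIntegrable_const),
            intervalIntegral.integral_const]
          congr 1
          rw [add_sub_cancel_left]
        have hq : δ⁻¹ • (x (t + δ) - x t) - v t = δ⁻¹ • ∫ s in t..(t+δ), (u s - u t) := by
          rw [hxinc, ← hsplit, smul_sub, smul_smul, inv_mul_cancel₀ hδ0.ne', one_smul, hut]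
        rw [hq, norm_smul, Real.norm_eq_abs, abs_of_pos (inv_pos.2 hδ0)]
        have hn : ‖∫ s in t..(t+δ), (u s - u t)‖ ≤ ∫ s in Set.Ioc t (t+δ), ‖u s - u t‖ := by
          have := intervalIntegral.norm_integral_le_integral_norm_uIoc
            (f := fun s => u s - u t) (a := t) (b := t + δ) (μ := volume)
          rwa [uIoc_of_le (by linarith)] at this
        have hsubb : Ioc t (t + δ) ⊆ Metric.closedBall t δ := by
          rw [Real.closedBall_eq_Icc]
          exact fun s hs => ⟨by linarith [hs.1.le], hs.2⟩
        have hb1 := (hn.trans (hball t (t+δ) hmem2 hmem1 hsubb (by linarith)))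
        calc δ⁻¹ * ‖∫ s in t..(t+δ), (u s - u t)‖
            ≤ δ⁻¹ * (2 * δ * ⨍ y in Metric.closedBall t δ, ‖u y - u t‖) :=
              mul_le_mul_of_nonneg_left hb1 (inv_pos.2 hδ0).le
          _ = 2 * ⨍ y in Metric.closedBall t δ, ‖u y - u t‖ := by
              field_simp
      · -- left quotient
        have hxinc := hinc (t - δ) hmem3
        have hflip : (∫ s in t..(t - δ), u s) = -(∫ s in (t - δ)..t, u s) :=
          intervalIntegral.integral_symm _ _
        have hsplit : (∫ s in (t-δ)..t, u s) - δ • u t = ∫ s in (t-δ)..t, (u s - u t) := by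
          rw [intervalIntegral.integral_sub (hIIu (t-δ) t) (intervalIntegrable_const),
            intervalIntegral.integral_const]
          congr 1
          rw [sub_sub_cancel]
        have hq : δ⁻¹ • (x (t - δ) - x t) + v t = -(δ⁻¹ • ∫ s in (t-δ)..t, (u s - u t)) := by
          rw [hxinc, hflip, ← hsplit, smul_sub, smul_smul, inv_mul_cancel₀ hδ0.ne', one_smul,
            hut, smul_neg]
          module
        rw [hq, norm_neg, norm_smul, Real.norm_eq_abs, abs_of_pos (inv_pos.2 hδ0)]
        have hn : ‖∫ s in (t-δ)..t, (u s - u t)‖ ≤ ∫ s in Set.Ioc (t-δ) t, ‖u s - u t‖ := by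
          have := intervalIntegral.norm_integral_le_integral_norm_uIoc
            (f := fun s => u s - u t) (a := t - δ) (b := t) (μ := volume)
          rwa [uIoc_of_le (by linarith)] at this
        have hsubb : Ioc (t - δ) t ⊆ Metric.closedBall t δ := by
          rw [Real.closedBall_eq_Icc]
          exact fun s hs => ⟨hs.1.le, by linarith [hs.2]⟩
        have hb1 := (hn.trans (hball (t-δ) t hmem3 hmem2 hsubb (by linarith)))
        calc δ⁻¹ * ‖∫ s in (t-δ)..t, (u s - u t)‖
            ≤ δ⁻¹ * (2 * δ * ⨍ y in Metric.closedBall t δ, ‖u y - u t‖) :=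
              mul_le_mul_of_nonneg_left hb1 (inv_pos.2 hδ0).le
          _ = 2 * ⨍ y in Metric.closedBall t δ, ‖u y - u t‖ := by
              field_simp
    -- sequences
    set δs : ℕ → ℝ := fun k => ε / (k + 1) with hδs
    have hδpos : ∀ k, 0 < δs k := fun k => by positivity
    have hδle : ∀ k, δs k ≤ ε := fun k => by
      rw [hδs]
      rw [div_le_iff₀ (by positivity : (0:ℝ) < (k:ℝ) + 1)]
      nlinarith [hεpos, (show (1:ℝ) ≤ (k:ℝ)+1 by simp)]
    have hδ0 : Tendsto δs atTop (𝓝 0) := by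
      have h1 : Tendsto (fun k : ℕ => 1 / (k + 1 : ℝ)) atTop (𝓝 0) :=
        tendsto_one_div_add_atTop_nhds_zero_nat
      have := h1.const_mul ε
      simp only [mul_zero] at this
      convert this using 2 with k
      rw [hδs]; ring
    have hδin : Tendsto δs atTop (𝓝[>] 0) :=
      tendsto_nhdsWithin_of_tendsto_nhds_of_eventually_within _ hδ0
        (Eventually.of_forall (fun k => hδpos k))
    have havgk : Tendsto (fun k => 2 * ⨍ y in Metric.closedBall t (δs k), ‖u y - u t‖)
        atTop (𝓝 0) := by
      have := (havg.comp hδin).const_mul (2:ℝ)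
      simpa using this
    have hmemR : ∀ k, x (t + δs k) ∈ X := fun k => hmem _
      ⟨by linarith [(hδpos k).le], by
        have h1 := hδle k
        have h2 : δs k ≤ b - t := h1.trans (min_le_right _ _)
        linarith [hb.2]⟩
    have hmemL : ∀ k, x (t - δs k) ∈ X := fun k => hmem _
      ⟨by
        have h2 : δs k ≤ t := (hδle k).trans (min_le_left _ _)
        linarith, by
        linarith [hδpos k, htb, hb.2]⟩
    constructor
    · apply tanCone_of_quot (fun k => x (t + δs k)) δs hmemR hδpos hδ0
      have hbd : ∀ k, ‖(δs k)⁻¹ • (x (t + δs k) - x t) - v t‖ ≤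
          2 * ⨍ y in Metric.closedBall t (δs k), ‖u y - u t‖ := fun k =>
        (key (δs k) (hδpos k) (hδle k)).1
      have h0 : Tendsto (fun k => (δs k)⁻¹ • (x (t + δs k) - x t) - v t) atTop (𝓝 0) :=
        squeeze_zero_norm hbd havgk
      simpa using h0.add_const (v t)
    · apply tanCone_of_quot (fun k => x (t - δs k)) δs hmemL hδpos hδ0
      have hbd : ∀ k, ‖(δs k)⁻¹ • (x (t - δs k) - x t) - (- v t)‖ ≤
          2 * ⨍ y in Metric.closedBall t (δs k), ‖u y - u t‖ := by
        intro k
        have := (key (δs k) (hδpos k) (hδle k)).2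
        rwa [sub_neg_eq_add]
      have h0 : Tendsto (fun k => (δs k)⁻¹ • (x (t - δs k) - x t) - (- v t)) atTop (𝓝 0) :=
        squeeze_zero_norm hbd havgk
      simpa using h0.add_const (- v t)
  -- assemble over the whole interval
  rw [ae_restrict_iff' measurableSet_Ico]
  set bs : ℕ → ℝ := fun m => T - T / (m + 2) with hbs
  have hbsmem : ∀ m, bs m ∈ Ioo (0:ℝ) T := by
    intro m
    constructor
    · rw [hbs]
      have h1 : T / (m + 2 : ℝ) < T := by
        rw [div_lt_iff₀ (by positivity)]
        nlinarith [(show (1:ℝ) < (m:ℝ) + 2 by push_cast; linarith [Nat.cast_nonneg (α := ℝ) m])]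
      simpa using h1
    · rw [hbs]
      have : (0:ℝ) < T / (m + 2) := by positivity
      linarith
  have hall : ∀ᵐ t ∂(volume : Measure ℝ), ∀ m : ℕ, t ∈ Ioo (0:ℝ) (bs m) →
      (v t ∈ tanCone X (x t) ∧ -v t ∈ tanCone X (x t)) :=
    ae_all_iff.2 (fun m => main (bs m) (hbsmem m))
  have hne : ∀ᵐ t ∂(volume : Measure ℝ), t ≠ 0 := by
    rw [ae_iff]
    have : {t : ℝ | ¬ t ≠ 0} = {0} := by ext t; simp
    rw [this]
    exact Real.volume_singleton
  filter_upwards [hall, hne] with t ht ht0 htmem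
  obtain ⟨ht1, ht2⟩ := htmem
  have ht1' : 0 < t := lt_of_le_of_ne ht1 (Ne.symm ht0)
  -- find m with t < bs m
  obtain ⟨m, hm⟩ := exists_nat_gt (T / (T - t))
  apply ht m
  refine ⟨ht1', ?_⟩
  rw [hbs]
  have hTt : 0 < T - t := by linarith
  have h2 : T / (T - t) < (m:ℝ) + 2 := by linarith
  have h3 : T / ((m:ℝ) + 2) < T - t := by
    rw [div_lt_iff₀ (by positivity)]
    calc T = T / (T - t) * (T - t) := by field_simp
      _ < ((m:ℝ) + 2) * (T - t) := mul_lt_mul_of_pos_right h2 hTt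
      _ = (T - t) * ((m:ℝ) + 2) := by ring
  simp only []
  linarith

/-- equivalence with the normal-cone differential inclusion (Corollary 6.6). -/
theorem stmt_11 {n : ℕ} (X : Set (Euc n)) (g : VarMetric n) (f : Euc n → Euc n)
    (hX : ClarkeRegular X) (hg : ContinuousOn g.B X) (hf : ContinuousOn f X) :
    ∀ x₀ ∈ X, ∀ T > (0:ℝ), ∀ x : ℝ → Euc n, x 0 = x₀ →
      (∀ t ∈ Set.Ico (0:ℝ) T, x t ∈ X) →
      (IsSolOn X (projVF X g f) x₀ x (Set.Ico 0 T) ↔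
        ∃ v : ℝ → Euc n, LocallyIntegrableOn v (Set.Ico 0 T) volume ∧
          (∀ t ∈ Set.Ico (0:ℝ) T, x t = x₀ + ∫ s in (0:ℝ)..t, v s) ∧
          (∀ᵐ t ∂(volume.restrict (Set.Ico (0:ℝ) T)),
            ∃ η ∈ normalCone X g (x t), v t = f (x t) - η)) := by
  obtain ⟨hloc, hreg⟩ := hX
  intro x₀ hx₀ T hT x hx0 hxX
  constructor
  · rintro ⟨h0, hmem, v, hvint, hvrepr, hvae⟩
    refine ⟨v, hvint, hvrepr, ?_⟩
    filter_upwards [hvae, ae_restrict_mem measurableSet_Ico] with t hvt htI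
    exact ⟨f (x t) - v t,
      proj_residual_mem_normal g f hloc (hxX t htI) (hreg _ (hxX t htI)) hvt, by abel⟩
  · rintro ⟨v, hvint, hvrepr, hvae⟩
    refine ⟨hx0, hxX, v, hvint, hvrepr, ?_⟩
    have htan := ae_two_sided_tangent hT hxX hvint (by
      intro t ht
      rw [hx0]
      exact hvrepr t ht)
    filter_upwards [hvae, htan, ae_restrict_mem measurableSet_Ico] with t hvt hpair htI
    obtain ⟨η, hη, hveq⟩ := hvt
    exact mem_projVF_of_normal g f (hreg _ (hxX t htI)) hpair.1 hpair.2 hη hveq
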